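/- arXiv:2010.07452 — 2 statements merged into one kernel-verified Lean document; each statement's English description precedes it below -/
import Mathlib

section
/- Let X be a Borel subset of ℝ^m, Y a finite set, U a finite set, T a transition kernel from X×U to X and Q an observation kernel from X to Y, and let η be the associated belief transition kernel. Assume that for some α_X < ∞ one has ‖T(·|x,u) − T(·|x',u)‖_TV ≤ α_X |x − x'| for all x, x' ∈ X and all u ∈ U. Then for every z, z' ∈ P(X), every u ∈ U, and every sequence (f_m)_{m≥1} of measurable functions f_m : X → ℝ with ‖f_m‖_∞ ≤ 1, one has ρ_BL^ρ(η(·|z,u), η(·|z',u)) ≤ 3(1 + α_X) ρ_BL(z, z'), where ρ_BL on the right-hand side is the bounded-Lipschitz metric on P(X) induced by the Euclidean metric on X. -/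
open MeasureTheory

noncomputable section

/-- `‖f‖_BL ≤ c` with respect to the distance-like function `d`:
there are `a, b ≥ 0` with `a + b ≤ c` such that `f` is bounded by `a` and
`b`-Lipschitz with respect to `d`. -/
def blNormLE {S : Type*} (d : S → S → ℝ) (f : S → ℝ) (c : ℝ) : Prop :=
  ∃ a b : ℝ, 0 ≤ a ∧ 0 ≤ b ∧ a + b ≤ c ∧ (∀ x, |f x| ≤ a) ∧
    ∀ x y, |f x - f y| ≤ b * d x y

/-- Bounded-Lipschitz distance between two measures, induced by `d`. -/
def blDist {S : Type*} [MeasurableSpace S] (d : S → S → ℝ) (μ ν : Measure S) : ℝ :=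
  sSup {r | ∃ f : S → ℝ, Measurable f ∧ blNormLE d f 1 ∧
    r = |∫ x, f x ∂μ - ∫ x, f x ∂ν|}

/-- Total variation distance between two measures. -/
def tvDist {S : Type*} [MeasurableSpace S] (μ ν : Measure S) : ℝ :=
  sSup {r | ∃ f : S → ℝ, Measurable f ∧ (∀ x, |f x| ≤ 1) ∧
    r = |∫ x, f x ∂μ - ∫ x, f x ∂ν|}

variable {X Y U : Type*} [MeasurableSpace X] [Fintype Y]

/-- One-step push-forward `zT_u` of a belief `z` through the transition kernel `T`. -/
def beliefPush (T : X → U → Measure X) (z : Measure X) (u : U) : Measure X :=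
  z.bind fun x => T x u

/-- Predictive probability `P(y|z,u) = ∫ Q(y|x₁) (zT_u)(dx₁)` of observing `y`. -/
def obsProb (T : X → U → Measure X) (Q : X → Y → ℝ) (z : Measure X) (u : U) (y : Y) : ℝ :=
  ∫ x, Q x y ∂(beliefPush T z u)

/-- Bayes update `F(z,u,y)` of the belief `z` after applying `u` and observing `y`. -/
def bayes (T : X → U → Measure X) (Q : X → Y → ℝ) (z : Measure X) (u : U) (y : Y) :
    Measure X :=
  (ENNReal.ofReal (obsProb T Q z u y))⁻¹ •
    ((beliefPush T z u).withDensity fun x => ENNReal.ofReal (Q x y))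

/-- Integral of a function `f` on beliefs against the belief transition kernel
`η(·|z,u) = Σ_{y : P(y|z,u) > 0} P(y|z,u) δ_{F(z,u,y)}`. -/
def etaInt (T : X → U → Measure X) (Q : X → Y → ℝ) (f : Measure X → ℝ)
    (z : Measure X) (u : U) : ℝ :=
  ∑ y : Y, if 0 < obsProb T Q z u y then obsProb T Q z u y * f (bayes T Q z u y) else 0

/-- Bounded-Lipschitz distance (with respect to a pseudometric `ρ` on beliefs)
between `η(·|z,u)` and `η(·|z',u)`. -/
def etaBLDist (T : X → U → Measure X) (Q : X → Y → ℝ)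
    (ρ : Measure X → Measure X → ℝ) (z z' : Measure X) (u : U) : ℝ :=
  sSup {r | ∃ f : Measure X → ℝ, blNormLE ρ f 1 ∧
    r = |etaInt T Q f z u - etaInt T Q f z' u|}

/-- The pseudometric `ρ(μ,ν) = Σ_{m ≥ 1} 2^{-(m+1)} |∫ f_m dμ - ∫ f_m dν|` on beliefs
induced by the sequence of test functions `fs` (with `fs k` playing the role of `f_{k+1}`). -/
def rhoSeq (fs : ℕ → X → ℝ) (μ ν : Measure X) : ℝ :=
  ∑' k : ℕ, (2 : ℝ)⁻¹ ^ (k + 2) * |∫ x, fs k x ∂μ - ∫ x, fs k x ∂ν|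

/-- Dobrushin coefficient of an observation channel `Q` into a finite set. -/
def dobrushinObs (Q : X → Y → ℝ) : ℝ :=
  ⨅ p : X × X, ∑ y : Y, min (Q p.1 y) (Q p.2 y)

/-- Dobrushin coefficient of a Markov kernel `K`, via finite measurable partitions. -/
def dobrushinKernel (K : X → Measure X) : ℝ :=
  sInf {r | ∃ (x x' : X) (n : ℕ) (A : Fin n → Set X),
    (∀ i, MeasurableSet (A i)) ∧ Pairwise (Function.onFun Disjoint A) ∧
    (⋃ i, A i) = Set.univ ∧
    r = ∑ i, min ((K x (A i)).toReal) ((K x' (A i)).toReal)}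

/-- `δ̃(T) = inf_u δ(T(·|·,u))`. -/
def dobrushinTrans (T : X → U → Measure X) : ℝ :=
  ⨅ u : U, dobrushinKernel fun x => T x u

end

/-!
Write `μ = zT_u`, `μ' = z'T_u` and let `ε` be their total variation distance. Pushing a test
function `q` with `|q| ≤ 1` through the observation channel gives
`∑_y |∫ q Q_y dμ - ∫ q Q_y dμ'| ≤ ε` (test against `q · ∑_y ± Q_y`). With `q = 1` this bounds the
change of the observation probabilities, hence the mixture part of `η`. For the posterior part,
`F(z,u,y)` integrates `f_k` to `∫ f_k Q_y dμ / P(y|z,u)`, so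
`P(y|z',u) |∫ f_k dF(z,u,y) - ∫ f_k dF(z',u,y)|` is at most
`|∫ f_k Q_y dμ - ∫ f_k Q_y dμ'| + |P(y|z,u) - P(y|z',u)|`,
whose sum over `y` is at most `2ε`; the weights `2^{-(k+2)}` of `ρ` add up to `1/2`.
Altogether `ρ_BL^ρ(η(·|z,u), η(·|z',u)) ≤ ε`. Finally `ε ≤ (1 + α_X) ρ_BL(z, z')`, because
`x ↦ ∫ ψ dT(·|x,u)` is bounded by `1` and `α_X`-Lipschitz.
-/

open ProbabilityTheory

lemma blNormLE.abs_le {S : Type*} {d : S → S → ℝ} {f : S → ℝ} {c : ℝ} (hf : blNormLE d f c)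
    (x : S) : |f x| ≤ c := by
  obtain ⟨a, b, -, hb, hab, hfa, -⟩ := hf
  linarith [hfa x]

section BoundedLipschitz

variable {S : Type*} [MeasurableSpace S]

lemma abs_integral_le_one (μ : Measure S) [IsProbabilityMeasure μ] {f : S → ℝ}
    (hf : ∀ x, |f x| ≤ 1) : |∫ x, f x ∂μ| ≤ 1 := by
  simpa using norm_integral_le_of_norm_le_const (μ := μ)
    (ae_of_all _ fun x => (Real.norm_eq_abs (f x)).trans_le (hf x))

lemma abs_integral_sub_integral_le_two (μ ν : Measure S) [IsProbabilityMeasure μ]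
    [IsProbabilityMeasure ν] {f : S → ℝ} (hf : ∀ x, |f x| ≤ 1) :
    |∫ x, f x ∂μ - ∫ x, f x ∂ν| ≤ 2 := by
  linarith [abs_sub (∫ x, f x ∂μ) (∫ x, f x ∂ν), abs_integral_le_one μ hf,
    abs_integral_le_one ν hf]

lemma tvDist_nonneg (μ ν : Measure S) : 0 ≤ tvDist μ ν :=
  Real.sSup_nonneg (by rintro _ ⟨f, -, -, rfl⟩; exact abs_nonneg _)

lemma le_tvDist (μ ν : Measure S) [IsProbabilityMeasure μ] [IsProbabilityMeasure ν]
    {f : S → ℝ} (hf : Measurable f) (hf1 : ∀ x, |f x| ≤ 1) :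
    |∫ x, f x ∂μ - ∫ x, f x ∂ν| ≤ tvDist μ ν :=
  le_csSup ⟨2, by rintro _ ⟨g, -, hg, rfl⟩; exact abs_integral_sub_integral_le_two μ ν hg⟩
    ⟨f, hf, hf1, rfl⟩

lemma tvDist_self (μ : Measure S) : tvDist μ μ = 0 :=
  le_antisymm (Real.sSup_le (by rintro _ ⟨f, -, -, rfl⟩; simp) le_rfl) (tvDist_nonneg μ μ)

lemma blDist_nonneg (d : S → S → ℝ) (μ ν : Measure S) : 0 ≤ blDist d μ ν :=
  Real.sSup_nonneg (by rintro _ ⟨f, -, -, rfl⟩; exact abs_nonneg _)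

lemma le_blDist (d : S → S → ℝ) (μ ν : Measure S) [IsProbabilityMeasure μ]
    [IsProbabilityMeasure ν] {f : S → ℝ} (hf : Measurable f) (hbl : blNormLE d f 1) :
    |∫ x, f x ∂μ - ∫ x, f x ∂ν| ≤ blDist d μ ν :=
  le_csSup ⟨2, by rintro _ ⟨g, -, hg, rfl⟩; exact abs_integral_sub_integral_le_two μ ν hg.abs_le⟩
    ⟨f, hf, hbl, rfl⟩

lemma blDist_self (d : S → S → ℝ) (μ : Measure S) : blDist d μ μ = 0 :=
  le_antisymm (Real.sSup_le (by rintro _ ⟨f, -, -, rfl⟩; simp) le_rfl) (blDist_nonneg d μ μ)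

lemma abs_integral_sub_le_mul_blDist (d : S → S → ℝ) (μ ν : Measure S) [IsProbabilityMeasure μ]
    [IsProbabilityMeasure ν] {f : S → ℝ} (hf : Measurable f) {c : ℝ} (hc : 0 < c)
    (hfc : blNormLE d f c) : |∫ x, f x ∂μ - ∫ x, f x ∂ν| ≤ c * blDist d μ ν := by
  obtain ⟨a, b, ha, hb, hab, hfa, hfb⟩ := hfc
  have hc' : 0 < c⁻¹ := inv_pos.2 hc
  have hscaled : blNormLE d (fun x => c⁻¹ * f x) 1 := by
    refine ⟨c⁻¹ * a, c⁻¹ * b, by positivity, by positivity, ?_, fun x => ?_, fun x y => ?_⟩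
    · rw [← mul_add, inv_mul_le_iff₀ hc, mul_one]
      exact hab
    · rw [abs_mul, abs_of_pos hc']
      exact mul_le_mul_of_nonneg_left (hfa x) hc'.le
    · rw [← mul_sub, abs_mul, abs_of_pos hc', mul_assoc]
      exact mul_le_mul_of_nonneg_left (hfb x y) hc'.le
  have h := le_blDist d μ ν (hf.const_mul c⁻¹) hscaled
  rwa [integral_const_mul, integral_const_mul, ← mul_sub, abs_mul, abs_of_pos hc',
    inv_mul_le_iff₀ hc] at h

end BoundedLipschitz

section KernelComp

variable {X Z : Type*} [MeasurableSpace X] [MeasurableSpace Z]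

lemma integral_comp_eq_integral_integral (κ : Kernel X Z) (μ : Measure X) {f : Z → ℝ}
    (hf : Integrable f (κ ∘ₘ μ)) : ∫ y, f y ∂(κ ∘ₘ μ) = ∫ x, ∫ y, f y ∂κ x ∂μ := by
  rw [Measure.comp_eq_comp_const_apply] at hf ⊢
  rw [Kernel.integral_comp hf, Kernel.const_apply]

lemma tvDist_comp_le_mul_blDist [PseudoMetricSpace X] (κ : Kernel X Z) [IsMarkovKernel κ]
    {α : ℝ} (hα : 0 ≤ α) (hκ : ∀ x x', tvDist (κ x) (κ x') ≤ α * dist x x')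
    (μ ν : Measure X) [IsProbabilityMeasure μ] [IsProbabilityMeasure ν] :
    tvDist (κ ∘ₘ μ) (κ ∘ₘ ν) ≤ (1 + α) * blDist (fun x x' => dist x x') μ ν := by
  refine Real.sSup_le ?_ (mul_nonneg (by linarith) (blDist_nonneg _ μ ν))
  rintro _ ⟨f, hf, hf1, rfl⟩
  have hint : ∀ (ξ : Measure X) [IsProbabilityMeasure ξ], Integrable f (κ ∘ₘ ξ) :=
    fun _ _ => .of_bound hf.aestronglyMeasurable 1
      (ae_of_all _ fun y => (Real.norm_eq_abs (f y)).trans_le (hf1 y))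
  have hG : blNormLE (fun x x' => dist x x') (fun x => ∫ y, f y ∂κ x) (1 + α) :=
    ⟨1, α, zero_le_one, hα, le_rfl, fun x => abs_integral_le_one (κ x) hf1,
      fun x x' => (le_tvDist (κ x) (κ x') hf hf1).trans (hκ x x')⟩
  rw [integral_comp_eq_integral_integral κ μ (hint μ),
    integral_comp_eq_integral_integral κ ν (hint ν)]
  exact abs_integral_sub_le_mul_blDist _ μ ν hf.stronglyMeasurable.integral_kernel.measurable
    (by linarith) hG

end KernelComp

lemma le_one_of_sum_eq_one {S Y : Type*} [Fintype Y] {Q : S → Y → ℝ} (hQ_nonneg : ∀ x y, 0 ≤ Q x y)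
    (hQ_sum : ∀ x, ∑ y, Q x y = 1) (x : S) (y : Y) : Q x y ≤ 1 :=
  (Finset.single_le_sum (fun i _ => hQ_nonneg x i) (Finset.mem_univ y)).trans_eq (hQ_sum x)

section Channel

variable {S Y : Type*} [MeasurableSpace S] [Fintype Y]

lemma integrable_mul_of_sum_eq_one (μ : Measure S) [IsFiniteMeasure μ] {Q : S → Y → ℝ}
    (hQ_meas : ∀ y, Measurable fun x => Q x y) (hQ_nonneg : ∀ x y, 0 ≤ Q x y)
    (hQ_sum : ∀ x, ∑ y, Q x y = 1) {q : S → ℝ} (hq : Measurable q) (hq1 : ∀ x, |q x| ≤ 1)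
    (y : Y) : Integrable (fun x => q x * Q x y) μ :=
  .of_bound (hq.mul (hQ_meas y)).aestronglyMeasurable 1 <| ae_of_all _ fun x => by
    rw [Real.norm_eq_abs, abs_mul, abs_of_nonneg (hQ_nonneg x y)]
    exact mul_le_one₀ (hq1 x) (hQ_nonneg x y) (le_one_of_sum_eq_one hQ_nonneg hQ_sum x y)

lemma sum_abs_integral_mul_sub_le_tvDist (μ ν : Measure S) [IsProbabilityMeasure μ]
    [IsProbabilityMeasure ν] {Q : S → Y → ℝ} (hQ_meas : ∀ y, Measurable fun x => Q x y)
    (hQ_nonneg : ∀ x y, 0 ≤ Q x y) (hQ_sum : ∀ x, ∑ y, Q x y = 1) {q : S → ℝ}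
    (hq : Measurable q) (hq1 : ∀ x, |q x| ≤ 1) :
    ∑ y, |∫ x, q x * Q x y ∂μ - ∫ x, q x * Q x y ∂ν| ≤ tvDist μ ν := by
  set D := fun y => ∫ x, q x * Q x y ∂μ - ∫ x, q x * Q x y ∂ν
  set c : Y → ℝ := fun y => if 0 ≤ D y then 1 else -1
  have hc : ∀ y, |c y| = 1 := fun y => by by_cases h : 0 ≤ D y <;> simp [c, h]
  have hcD : ∀ y, |D y| = c y * D y := fun y => by
    by_cases h : 0 ≤ D y
    · simp [c, h, abs_of_nonneg h]
    · simp [c, h, abs_of_neg (not_le.1 h)]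
  set ψ := fun x => ∑ y, c y * (q x * Q x y)
  have hψ : Measurable ψ :=
    Finset.measurable_sum _ fun y _ => (hq.mul (hQ_meas y)).const_mul (c y)
  have hψ1 : ∀ x, |ψ x| ≤ 1 := fun x =>
    calc |ψ x| ≤ ∑ y, |c y * (q x * Q x y)| := Finset.abs_sum_le_sum_abs _ _
      _ ≤ ∑ y, Q x y := Finset.sum_le_sum fun y _ => by
        rw [abs_mul, hc, one_mul, abs_mul, abs_of_nonneg (hQ_nonneg x y)]
        exact mul_le_of_le_one_left (hQ_nonneg x y) (hq1 x)
      _ = 1 := hQ_sum x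
  have hψD : ∫ x, ψ x ∂μ - ∫ x, ψ x ∂ν = ∑ y, c y * D y := by
    have hint : ∀ (ξ : Measure S) [IsProbabilityMeasure ξ] (y : Y),
        Integrable (fun x => c y * (q x * Q x y)) ξ := fun ξ _ y =>
      (integrable_mul_of_sum_eq_one ξ hQ_meas hQ_nonneg hQ_sum hq hq1 y).const_mul _
    simp only [ψ, D]
    rw [integral_finsetSum _ fun y _ => hint μ y, integral_finsetSum _ fun y _ => hint ν y,
      ← Finset.sum_sub_distrib]
    simp only [integral_const_mul, mul_sub]
  calc ∑ y, |D y| = ∫ x, ψ x ∂μ - ∫ x, ψ x ∂ν := by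
        rw [hψD]; exact Finset.sum_congr rfl fun y _ => hcD y
    _ ≤ |∫ x, ψ x ∂μ - ∫ x, ψ x ∂ν| := le_abs_self _
    _ ≤ tvDist μ ν := le_tvDist μ ν hψ hψ1

end Channel

lemma abs_integral_mul_le_integral {S : Type*} [MeasurableSpace S] {μ : Measure S} {g w : S → ℝ}
    (hw : Integrable w μ) (hw0 : ∀ x, 0 ≤ w x) (hg : ∀ x, |g x| ≤ 1) :
    |∫ x, g x * w x ∂μ| ≤ ∫ x, w x ∂μ :=
  abs_integral_le_integral_abs.trans <| integral_mono_of_nonneg (ae_of_all _ fun _ => abs_nonneg _)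
    hw (ae_of_all _ fun x => show |g x * w x| ≤ w x by
      rw [abs_mul, abs_of_nonneg (hw0 x)]
      exact mul_le_of_le_one_left (hw0 x) (hg x))

/-- `p = 0` is allowed: then `A = 0` and the junk value `A / p = 0` makes the bound still hold. -/
lemma mul_abs_div_sub_div_le {p p' A A' : ℝ} (hp : 0 ≤ p) (hp' : 0 ≤ p') (hA : |A| ≤ p)
    (hA' : |A'| ≤ p') : p' * |A / p - A' / p'| ≤ |A - A'| + |p - p'| := by
  rcases hp'.eq_or_lt with rfl | hp'
  · simp only [zero_mul]; positivity
  have hAp : |A / p| ≤ 1 := by rw [abs_div, abs_of_nonneg hp]; exact div_le_one_of_le₀ hA hp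
  have key : p' * (A / p - A' / p') = (A - A') + A / p * (p' - p) := by
    rcases hp.eq_or_lt with rfl | hp
    · obtain rfl : A = 0 := abs_nonpos_iff.1 hA
      field_simp; ring
    · field_simp; ring
  calc p' * |A / p - A' / p'| = |(A - A') + A / p * (p' - p)| := by
        rw [← key, abs_mul, abs_of_pos hp']
    _ ≤ |A - A'| + |A / p| * |p' - p| := by rw [← abs_mul]; exact abs_add_le _ _
    _ ≤ |A - A'| + 1 * |p - p'| := by rw [abs_sub_comm p']; gcongr
    _ = |A - A'| + |p - p'| := by rw [one_mul]

lemma sum_tsum_inv_two_pow_mul_le {ι : Type*} [Fintype ι] {G : ℕ → ι → ℝ} {C : ℝ}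
    (hG0 : ∀ k i, 0 ≤ G k i) (hG : ∀ k, ∑ i, G k i ≤ C) :
    ∑ i, ∑' k, (2 : ℝ)⁻¹ ^ (k + 2) * G k i ≤ C / 2 := by
  have hw : HasSum (fun k : ℕ => (2 : ℝ)⁻¹ ^ (k + 2)) 2⁻¹ := by
    have h := (hasSum_geometric_of_lt_one (r := (2 : ℝ)⁻¹) (by norm_num) (by norm_num)).mul_left
      ((2 : ℝ)⁻¹ ^ 2)
    rw [show (fun k : ℕ => (2 : ℝ)⁻¹ ^ (k + 2)) = fun k => (2 : ℝ)⁻¹ ^ 2 * (2 : ℝ)⁻¹ ^ k from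
      funext fun k => by ring]
    rwa [show (2 : ℝ)⁻¹ ^ 2 * (1 - 2⁻¹)⁻¹ = 2⁻¹ by norm_num] at h
  have hGC : ∀ k i, G k i ≤ C := fun k i =>
    (Finset.single_le_sum (fun j _ => hG0 k j) (Finset.mem_univ i)).trans (hG k)
  have hsum : ∀ i, Summable fun k => (2 : ℝ)⁻¹ ^ (k + 2) * G k i := fun i =>
    Summable.of_nonneg_of_le (fun k => mul_nonneg (by positivity) (hG0 k i))
      (fun k => mul_le_mul_of_nonneg_left (hGC k i) (by positivity)) (hw.summable.mul_right C)
  rw [← Summable.tsum_finsetSum fun i _ => hsum i]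
  calc ∑' k, ∑ i, (2 : ℝ)⁻¹ ^ (k + 2) * G k i ≤ ∑' k, (2 : ℝ)⁻¹ ^ (k + 2) * C :=
        Summable.tsum_le_tsum (fun k => by rw [← Finset.mul_sum]; gcongr; exact hG k)
          (summable_sum fun i _ => hsum i) (hw.summable.mul_right C)
    _ = C / 2 := by rw [tsum_mul_right, hw.tsum_eq]; ring

section Belief

variable {X Y U : Type*} [MeasurableSpace X]

lemma obsProb_nonneg (T : X → U → Measure X) {Q : X → Y → ℝ} (hQ_nonneg : ∀ x y, 0 ≤ Q x y)
    (z : Measure X) (u : U) (y : Y) : 0 ≤ obsProb T Q z u y :=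
  integral_nonneg fun x => hQ_nonneg x y

/-- No positivity of `P(y|z,u)` is needed: if it vanishes, both sides are `0`, since
`(∞ : ℝ≥0∞).toReal = 0` and `x / 0 = 0`. -/
lemma integral_bayes (T : X → U → Measure X) {Q : X → Y → ℝ}
    (hQ_meas : ∀ y, Measurable fun x => Q x y) (hQ_nonneg : ∀ x y, 0 ≤ Q x y)
    (z : Measure X) (u : U) (y : Y) (g : X → ℝ) :
    ∫ x, g x ∂(bayes T Q z u y) = (∫ x, g x * Q x y ∂(beliefPush T z u)) / obsProb T Q z u y := by
  have hofReal : (fun x => ENNReal.ofReal (Q x y)) = fun x => ((Q x y).toNNReal : ENNReal) := rfl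
  rw [bayes, hofReal, integral_smul_measure, integral_withDensity_eq_integral_smul
    (f := fun x => (Q x y).toNNReal) (hQ_meas y).real_toNNReal]
  have hdens : (fun x => (Q x y).toNNReal • g x) = fun x => g x * Q x y := funext fun x => by
    rw [NNReal.smul_def, Real.coe_toNNReal _ (hQ_nonneg x y), smul_eq_mul, mul_comm]
  rw [hdens, ENNReal.toReal_inv, ENNReal.toReal_ofReal (obsProb_nonneg T hQ_nonneg z u y),
    smul_eq_mul, inv_mul_eq_div]

variable [Fintype Y]

lemma etaInt_eq_sum (T : X → U → Measure X) {Q : X → Y → ℝ} (hQ_nonneg : ∀ x y, 0 ≤ Q x y)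
    (f : Measure X → ℝ) (z : Measure X) (u : U) :
    etaInt T Q f z u = ∑ y, obsProb T Q z u y * f (bayes T Q z u y) := by
  refine Finset.sum_congr rfl fun y _ => ?_
  split_ifs with h
  · rfl
  · rw [le_antisymm (not_lt.1 h) (obsProb_nonneg T hQ_nonneg z u y), zero_mul]

variable (T : X → U → Measure X) {Q : X → Y → ℝ} (z z' : Measure X) (u : U)
  [IsProbabilityMeasure (beliefPush T z u)] [IsProbabilityMeasure (beliefPush T z' u)]

lemma sum_abs_obsProb_sub_le_tvDist (hQ_meas : ∀ y, Measurable fun x => Q x y)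
    (hQ_nonneg : ∀ x y, 0 ≤ Q x y) (hQ_sum : ∀ x, ∑ y, Q x y = 1) :
    ∑ y, |obsProb T Q z u y - obsProb T Q z' u y|
      ≤ tvDist (beliefPush T z u) (beliefPush T z' u) := by
  have h := sum_abs_integral_mul_sub_le_tvDist (beliefPush T z u) (beliefPush T z' u) hQ_meas
    hQ_nonneg hQ_sum (q := fun _ => 1) measurable_const (by simp)
  simp only [one_mul] at h
  exact h

lemma obsProb_mul_abs_integral_bayes_sub_le (hQ_meas : ∀ y, Measurable fun x => Q x y)
    (hQ_nonneg : ∀ x y, 0 ≤ Q x y) (hQ_sum : ∀ x, ∑ y, Q x y = 1) {g : X → ℝ}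
    (hg : ∀ x, |g x| ≤ 1) (y : Y) :
    obsProb T Q z' u y * |∫ x, g x ∂(bayes T Q z u y) - ∫ x, g x ∂(bayes T Q z' u y)|
      ≤ |∫ x, g x * Q x y ∂(beliefPush T z u) - ∫ x, g x * Q x y ∂(beliefPush T z' u)|
        + |obsProb T Q z u y - obsProb T Q z' u y| := by
  have hQ_int : ∀ ξ : Measure X, [IsProbabilityMeasure ξ] → Integrable (fun x => Q x y) ξ :=
    fun ξ _ => by
      simpa using integrable_mul_of_sum_eq_one ξ hQ_meas hQ_nonneg hQ_sum (q := fun _ => 1)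
        measurable_const (by simp) y
  rw [integral_bayes T hQ_meas hQ_nonneg, integral_bayes T hQ_meas hQ_nonneg]
  exact mul_abs_div_sub_div_le (obsProb_nonneg T hQ_nonneg z u y)
    (obsProb_nonneg T hQ_nonneg z' u y)
    (abs_integral_mul_le_integral (hQ_int (beliefPush T z u)) (hQ_nonneg · y) hg)
    (abs_integral_mul_le_integral (hQ_int (beliefPush T z' u)) (hQ_nonneg · y) hg)

lemma sum_obsProb_mul_rhoSeq_bayes_le_tvDist (hQ_meas : ∀ y, Measurable fun x => Q x y)
    (hQ_nonneg : ∀ x y, 0 ≤ Q x y) (hQ_sum : ∀ x, ∑ y, Q x y = 1) {fs : ℕ → X → ℝ}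
    (hfs_meas : ∀ k, Measurable (fs k)) (hfs_bdd : ∀ k x, |fs k x| ≤ 1) :
    ∑ y, obsProb T Q z' u y * rhoSeq fs (bayes T Q z u y) (bayes T Q z' u y)
      ≤ tvDist (beliefPush T z u) (beliefPush T z' u) := by
  set ε := tvDist (beliefPush T z u) (beliefPush T z' u)
  have hk : ∀ k, ∑ y, obsProb T Q z' u y
      * |∫ x, fs k x ∂(bayes T Q z u y) - ∫ x, fs k x ∂(bayes T Q z' u y)| ≤ 2 * ε := fun k =>
    calc _ ≤ ∑ y, (|∫ x, fs k x * Q x y ∂(beliefPush T z u)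
            - ∫ x, fs k x * Q x y ∂(beliefPush T z' u)|
          + |obsProb T Q z u y - obsProb T Q z' u y|) :=
          Finset.sum_le_sum fun y _ =>
            obsProb_mul_abs_integral_bayes_sub_le T z z' u hQ_meas hQ_nonneg hQ_sum (hfs_bdd k) y
      _ ≤ ε + ε := by
          rw [Finset.sum_add_distrib]
          exact add_le_add (sum_abs_integral_mul_sub_le_tvDist _ _ hQ_meas hQ_nonneg hQ_sum
            (hfs_meas k) (hfs_bdd k))
            (sum_abs_obsProb_sub_le_tvDist T z z' u hQ_meas hQ_nonneg hQ_sum)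
      _ = 2 * ε := by ring
  calc _ = ∑ y, ∑' k, (2 : ℝ)⁻¹ ^ (k + 2) * (obsProb T Q z' u y
        * |∫ x, fs k x ∂(bayes T Q z u y) - ∫ x, fs k x ∂(bayes T Q z' u y)|) := by
        simp only [rhoSeq, ← tsum_mul_left, mul_left_comm]
    _ ≤ 2 * ε / 2 := sum_tsum_inv_two_pow_mul_le
        (fun k y => mul_nonneg (obsProb_nonneg T hQ_nonneg z' u y) (abs_nonneg _)) hk
    _ = ε := by ring

theorem etaBLDist_le_tvDist_beliefPush (hQ_meas : ∀ y, Measurable fun x => Q x y)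
    (hQ_nonneg : ∀ x y, 0 ≤ Q x y) (hQ_sum : ∀ x, ∑ y, Q x y = 1) {fs : ℕ → X → ℝ}
    (hfs_meas : ∀ k, Measurable (fs k)) (hfs_bdd : ∀ k x, |fs k x| ≤ 1) :
    etaBLDist T Q (rhoSeq fs) z z' u ≤ tvDist (beliefPush T z u) (beliefPush T z' u) := by
  set ε := tvDist (beliefPush T z u) (beliefPush T z' u)
  set p := obsProb T Q z u
  set p' := obsProb T Q z' u
  set F := bayes T Q z u
  set F' := bayes T Q z' u
  refine Real.sSup_le ?_ (tvDist_nonneg _ _)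
  rintro _ ⟨f, ⟨a, b, ha, hb, hab, hfa, hfb⟩, rfl⟩
  have hsplit : etaInt T Q f z u - etaInt T Q f z' u
      = ∑ y, (p y - p' y) * f (F y) + ∑ y, p' y * (f (F y) - f (F' y)) := by
    rw [etaInt_eq_sum T hQ_nonneg, etaInt_eq_sum T hQ_nonneg, ← Finset.sum_add_distrib,
      ← Finset.sum_sub_distrib]
    exact Finset.sum_congr rfl fun y _ => by ring
  have hmix : |∑ y, (p y - p' y) * f (F y)| ≤ a * ε :=
    calc _ ≤ ∑ y, |p y - p' y| * a := (Finset.abs_sum_le_sum_abs _ _).trans <|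
          Finset.sum_le_sum fun y _ => by rw [abs_mul]; gcongr; exact hfa _
      _ = a * ∑ y, |p y - p' y| := by rw [Finset.mul_sum]; simp only [mul_comm]
      _ ≤ a * ε := by gcongr; exact sum_abs_obsProb_sub_le_tvDist T z z' u hQ_meas hQ_nonneg hQ_sum
  have hpost : |∑ y, p' y * (f (F y) - f (F' y))| ≤ b * ε :=
    calc _ ≤ ∑ y, p' y * (b * rhoSeq fs (F y) (F' y)) := (Finset.abs_sum_le_sum_abs _ _).trans <|
          Finset.sum_le_sum fun y _ => by
            rw [abs_mul, abs_of_nonneg (obsProb_nonneg T hQ_nonneg z' u y)]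
            gcongr
            · exact obsProb_nonneg T hQ_nonneg z' u y
            · exact hfb _ _
      _ = b * ∑ y, p' y * rhoSeq fs (F y) (F' y) := by
          rw [Finset.mul_sum]; simp only [mul_left_comm]
      _ ≤ b * ε := by
          gcongr
          exact sum_obsProb_mul_rhoSeq_bayes_le_tvDist T z z' u hQ_meas hQ_nonneg hQ_sum hfs_meas
            hfs_bdd
  rw [hsplit]
  nlinarith [abs_add_le (∑ y, (p y - p' y) * f (F y)) (∑ y, p' y * (f (F y) - f (F' y))),
    tvDist_nonneg (beliefPush T z u) (beliefPush T z' u)]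

end Belief

lemma MeasureTheory.Measure.eq_of_subsingleton {S : Type*} [MeasurableSpace S] [Subsingleton S]
    (μ ν : Measure S) [IsProbabilityMeasure μ] [IsProbabilityMeasure ν] : μ = ν := by
  ext s -
  rcases s.eq_empty_or_nonempty with rfl | hs
  · simp
  · rw [hs.eq_univ, measure_univ, measure_univ]

theorem statement0_general {m : ℕ} (Xs : Set (EuclideanSpace ℝ (Fin m)))
    {Y U : Type*} [Fintype Y]
    (T : Xs → U → MeasureTheory.Measure Xs)
    (hT_meas : ∀ u : U, Measurable fun x : Xs => T x u)
    (hT_prob : ∀ (x : Xs) (u : U), MeasureTheory.IsProbabilityMeasure (T x u))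
    (Q : Xs → Y → ℝ)
    (hQ_meas : ∀ y : Y, Measurable fun x : Xs => Q x y)
    (hQ_nonneg : ∀ (x : Xs) (y : Y), 0 ≤ Q x y)
    (hQ_sum : ∀ x : Xs, ∑ y : Y, Q x y = 1)
    (αX : ℝ)
    (hT_lip : ∀ (x x' : Xs) (u : U), tvDist (T x u) (T x' u) ≤ αX * dist x x')
    (fs : ℕ → Xs → ℝ)
    (hfs_meas : ∀ k, Measurable (fs k))
    (hfs_bdd : ∀ (k : ℕ) (x : Xs), |fs k x| ≤ 1)
    (z z' : MeasureTheory.Measure Xs)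
    (hz : MeasureTheory.IsProbabilityMeasure z)
    (hz' : MeasureTheory.IsProbabilityMeasure z')
    (u : U) :
    etaBLDist T Q (rhoSeq fs) z z' u ≤
      3 * (1 + αX) * blDist (fun x x' : Xs => dist x x') z z' := by
  let κ : Kernel Xs Xs := ⟨fun x => T x u, hT_meas u⟩
  have : IsMarkovKernel κ := ⟨fun x => hT_prob x u⟩
  have : IsProbabilityMeasure (beliefPush T z u) := inferInstanceAs (IsProbabilityMeasure (κ ∘ₘ z))
  have : IsProbabilityMeasure (beliefPush T z' u) :=
    inferInstanceAs (IsProbabilityMeasure (κ ∘ₘ z'))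
  have hη := etaBLDist_le_tvDist_beliefPush T z z' u hQ_meas hQ_nonneg hQ_sum hfs_meas hfs_bdd
  rcases le_or_gt 0 αX with hα | hα
  · calc _ ≤ tvDist (κ ∘ₘ z) (κ ∘ₘ z') := hη
      _ ≤ (1 + αX) * blDist (fun x x' : Xs => dist x x') z z' :=
          tvDist_comp_le_mul_blDist κ hα (fun x x' => hT_lip x x' u) z z'
      _ ≤ 3 * (1 + αX) * blDist (fun x x' : Xs => dist x x') z z' := by
          nlinarith [blDist_nonneg (fun x x' : Xs => dist x x') z z']
  · have : Subsingleton Xs := ⟨fun x x' => dist_le_zero.1 <| nonpos_of_mul_nonneg_right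
      ((tvDist_nonneg _ _).trans (hT_lip x x' u)) hα⟩
    obtain rfl := Measure.eq_of_subsingleton z z'
    simpa [tvDist_self, blDist_self] using hη

theorem statement0 {m : ℕ} (Xs : Set (EuclideanSpace ℝ (Fin m))) (hXs : MeasurableSet Xs)
    {Y U : Type*} [Fintype Y] [Fintype U]
    (T : Xs → U → MeasureTheory.Measure Xs)
    (hT_meas : ∀ u : U, Measurable fun x : Xs => T x u)
    (hT_prob : ∀ (x : Xs) (u : U), MeasureTheory.IsProbabilityMeasure (T x u))
    (Q : Xs → Y → ℝ)
    (hQ_meas : ∀ y : Y, Measurable fun x : Xs => Q x y)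
    (hQ_nonneg : ∀ (x : Xs) (y : Y), 0 ≤ Q x y)
    (hQ_sum : ∀ x : Xs, ∑ y : Y, Q x y = 1)
    (αX : ℝ)
    (hT_lip : ∀ (x x' : Xs) (u : U), tvDist (T x u) (T x' u) ≤ αX * dist x x')
    (fs : ℕ → Xs → ℝ)
    (hfs_meas : ∀ k, Measurable (fs k))
    (hfs_bdd : ∀ (k : ℕ) (x : Xs), |fs k x| ≤ 1)
    (z z' : MeasureTheory.Measure Xs)
    (hz : MeasureTheory.IsProbabilityMeasure z)
    (hz' : MeasureTheory.IsProbabilityMeasure z')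
    (u : U) :
    etaBLDist T Q (rhoSeq fs) z z' u ≤
      3 * (1 + αX) * blDist (fun x x' : Xs => dist x x') z z' :=
  statement0_general Xs T hT_meas hT_prob Q hQ_meas hQ_nonneg hQ_sum αX hT_lip fs hfs_meas hfs_bdd z
    z' hz hz' u
end

section
/- Let (Z,d) be a metric space, U a finite nonempty set, β ∈ (0,1), c : Z×U → ℝ bounded measurable with |c(z,u) − c(z',u)| ≤ α_c d(z,z') for all z, z' ∈ Z and u ∈ U, and let η be a Markov kernel from Z×U to Z satisfying the bounded-Lipschitz contraction condition with constant α_Z. Define the value iteration v_0 ≡ 0 and v_{k+1}(z) = min_{u∈U} ( c(z,u) + β ∫ v_k(z₁) η(dz₁|z,u) ). Then for every k ≥ 1, ‖v_k‖_BL ≤ α_c Σ_{t=0}^{k−1} (βα_Z)^t + ‖c‖_∞ Σ_{t=0}^{k−1} (βα_Z)^t (1 − β^{k−t})/(1 − β). In particular, if βα_Z < 1 then ‖v_k‖_BL ≤ (1/(1 − βα_Z)) ( ‖c‖_∞/(1 − β) + α_c ) for all k. -/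
/-!
With the Bellman operator `T f z = min_u (c z u + β ∫ f dη(·|z,u))` we have `v (k+1) = T (v k)`.
If `|f| ≤ a` and `‖f‖_BL ≤ C`, then `|T f| ≤ ‖c‖_∞ + β a`, and, because a minimum over finitely
many indices is 1-Lipschitz for the sup distance, the contraction condition makes `T f`
Lipschitz with constant `α_c + β α_Z C`. Unrolling these two recursions from `v 0 = 0` gives the
bound of the theorem, and summing the geometric series gives the uniform bound.
-/

open MeasureTheory Finset

noncomputable section

/-- Sup norm `‖c‖_∞` of a two-variable (stage cost) function. -/
def supNorm {Z U : Type*} (c : Z → U → ℝ) : ℝ :=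
  ⨆ p : Z × U, |c p.1 p.2|

/-- The bounded-Lipschitz contraction condition for the kernel `η` with constant `αZ`:
`|∫ f dη(·|z,u) − ∫ f dη(·|z',u)| ≤ αZ ‖f‖_BL d(z,z')` for every bounded Lipschitz `f`. -/
def blContract {Z U : Type*} [MeasurableSpace Z] [MetricSpace Z]
    (η : Z → U → Measure Z) (αZ : ℝ) : Prop :=
  ∀ (f : Z → ℝ) (C : ℝ), blNormLE dist f C → ∀ (u : U) (z z' : Z),
    |∫ x, f x ∂(η z u) - ∫ x, f x ∂(η z' u)| ≤ αZ * C * dist z z'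

end

lemma abs_ciInf_sub_ciInf_le {ι : Type*} [Finite ι] [Nonempty ι] {f g : ι → ℝ} {M : ℝ}
    (h : ∀ i, |f i - g i| ≤ M) : |(⨅ i, f i) - ⨅ i, g i| ≤ M := by
  have key : ∀ f g : ι → ℝ, (∀ i, f i - g i ≤ M) → (⨅ i, f i) - ⨅ i, g i ≤ M := by
    intro f g h
    rw [sub_le_comm]
    exact le_ciInf fun i =>
      (sub_le_sub_right (ciInf_le (Set.finite_range f).bddBelow i) M).trans (by linarith [h i])
  rw [abs_sub_le_iff]
  exact ⟨key f g fun i => (abs_le.mp (h i)).2, key g f fun i => by linarith [(abs_le.mp (h i)).1]⟩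

lemma abs_integral_le_of_abs_le {α : Type*} [MeasurableSpace α] {μ : Measure α}
    [IsProbabilityMeasure μ] {f : α → ℝ} {M : ℝ} (h : ∀ x, |f x| ≤ M) :
    |∫ x, f x ∂μ| ≤ M := by
  simpa using norm_integral_le_of_norm_le_const (μ := μ)
    (Filter.Eventually.of_forall fun x => (Real.norm_eq_abs _).trans_le (h x))

lemma abs_le_supNorm {Z U : Type*} {c : Z → U → ℝ} (hc : ∃ M, ∀ z u, |c z u| ≤ M)
    (z : Z) (u : U) : |c z u| ≤ supNorm c := by
  obtain ⟨M, hM⟩ := hc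
  exact le_ciSup (f := fun p : Z × U => |c p.1 p.2|) ⟨M, by rintro _ ⟨p, rfl⟩; exact hM p.1 p.2⟩
    (z, u)

lemma supNorm_nonneg {Z U : Type*} (c : Z → U → ℝ) : 0 ≤ supNorm c :=
  Real.iSup_nonneg fun _ => abs_nonneg _

section blNormLE

variable {S : Type*} {d : S → S → ℝ} {f : S → ℝ} {C : ℝ}

lemma blNormLE.nonneg (h : blNormLE d f C) : 0 ≤ C := by
  obtain ⟨a, b, ha, hb, hab, -⟩ := h
  linarith

lemma blNormLE.mono (h : blNormLE d f C) {C' : ℝ} (hC : C ≤ C') : blNormLE d f C' := by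
  obtain ⟨a, b, ha, hb, hab, hfa, hfb⟩ := h
  exact ⟨a, b, ha, hb, hab.trans hC, hfa, hfb⟩

end blNormLE

noncomputable def bellman {Z U : Type*} [MeasurableSpace Z] (c : Z → U → ℝ) (β : ℝ)
    (η : Z → U → Measure Z) (f : Z → ℝ) (z : Z) : ℝ :=
  ⨅ u, c z u + β * ∫ x, f x ∂(η z u)

section Bellman

variable {Z U : Type*} [MeasurableSpace Z] [Finite U] [Nonempty U]
  {c : Z → U → ℝ} {β αc αZ S : ℝ} {η : Z → U → Measure Z} {f : Z → ℝ}

lemma abs_bellman_le [∀ z u, IsProbabilityMeasure (η z u)] (hβ : 0 ≤ β)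
    (hc : ∀ z u, |c z u| ≤ S) {a : ℝ} (hf : ∀ x, |f x| ≤ a) (z : Z) :
    |bellman c β η f z| ≤ S + β * a := by
  have := abs_ciInf_sub_ciInf_le (f := fun u => c z u + β * ∫ x, f x ∂(η z u))
    (g := fun _ => 0) (M := S + β * a) fun u => by
      rw [sub_zero]
      calc |c z u + β * ∫ x, f x ∂(η z u)| ≤ |c z u| + β * |∫ x, f x ∂(η z u)| :=
            (abs_add_le _ _).trans_eq (by rw [abs_mul, abs_of_nonneg hβ])
        _ ≤ S + β * a := by gcongr; exacts [hc z u, abs_integral_le_of_abs_le hf]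
  simpa [bellman] using this

variable [MetricSpace Z]

lemma abs_bellman_sub_le (hβ : 0 ≤ β) (hc : ∀ z z' u, |c z u - c z' u| ≤ αc * dist z z')
    (hη : blContract η αZ) {C : ℝ} (hf : blNormLE dist f C) (z z' : Z) :
    |bellman c β η f z - bellman c β η f z'| ≤ (αc + β * αZ * C) * dist z z' := by
  refine abs_ciInf_sub_ciInf_le fun u => ?_
  calc |c z u + β * ∫ x, f x ∂(η z u) - (c z' u + β * ∫ x, f x ∂(η z' u))|
      = |(c z u - c z' u) + β * (∫ x, f x ∂(η z u) - ∫ x, f x ∂(η z' u))| := by ring_nf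
    _ ≤ |c z u - c z' u| + β * |∫ x, f x ∂(η z u) - ∫ x, f x ∂(η z' u)| :=
        (abs_add_le _ _).trans_eq (by rw [abs_mul, abs_of_nonneg hβ])
    _ ≤ αc * dist z z' + β * (αZ * C * dist z z') := by
        gcongr; exacts [hc z z' u, hη f C hf u z z']
    _ = (αc + β * αZ * C) * dist z z' := by ring

lemma bellman_blNormLE [∀ z u, IsProbabilityMeasure (η z u)] (hβ : 0 ≤ β) (hαc : 0 ≤ αc)
    (hαZ : 0 ≤ αZ) (hS : 0 ≤ S) (hc : ∀ z u, |c z u| ≤ S)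
    (hc_lip : ∀ z z' u, |c z u - c z' u| ≤ αc * dist z z') (hη : blContract η αZ)
    {a C : ℝ} (ha : 0 ≤ a) (hfa : ∀ x, |f x| ≤ a) (hf : blNormLE dist f C) :
    blNormLE dist (bellman c β η f) (S + β * a + (αc + β * αZ * C)) := by
  have hC := hf.nonneg
  exact ⟨_, _, by positivity, by positivity, le_rfl, abs_bellman_le hβ hc hfa,
    abs_bellman_sub_le hβ hc_lip hη hf⟩

end Bellman

section blBound

variable (S β αc αZ : ℝ)

noncomputable def blBound (k : ℕ) : ℝ :=
  αc * ∑ t ∈ range k, (β * αZ) ^ t +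
    S * ∑ t ∈ range k, (β * αZ) ^ t * (1 - β ^ (k - t)) / (1 - β)

variable {S β αc αZ}

lemma blBound_succ (hβ : β ≠ 1) (k : ℕ) :
    blBound S β αc αZ (k + 1) =
      S + β * (S * ∑ t ∈ range k, β ^ t) + (αc + β * αZ * blBound S β αc αZ k) := by
  have hgeom : (1 - β ^ (k + 1)) / (1 - β) = β * ∑ t ∈ range k, β ^ t + 1 := by
    rw [← neg_div_neg_eq, neg_sub, neg_sub, ← geom_sum_eq hβ, geom_sum_succ]
  have hshift : ∑ t ∈ range k, (β * αZ) ^ (t + 1) * ((1 - β ^ (k + 1 - (t + 1))) / (1 - β)) =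
      β * αZ * ∑ t ∈ range k, (β * αZ) ^ t * ((1 - β ^ (k - t)) / (1 - β)) := by
    rw [mul_sum]
    exact sum_congr rfl fun t _ => by rw [Nat.add_sub_add_right]; ring
  simp only [blBound, geom_sum_succ, mul_div_assoc]
  rw [sum_range_succ', hshift, pow_zero, Nat.sub_zero, hgeom]
  ring

lemma blBound_le (hS : 0 ≤ S) (hαc : 0 ≤ αc) (hβ0 : 0 ≤ β) (hβ1 : β < 1) (hαZ : 0 ≤ αZ)
    (hβαZ : β * αZ < 1) (k : ℕ) :
    blBound S β αc αZ k ≤ 1 / (1 - β * αZ) * (S / (1 - β) + αc) := by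
  have hβ1' : 0 < 1 - β := by linarith
  have hgeom : ∑ t ∈ range k, (β * αZ) ^ t ≤ 1 / (1 - β * αZ) := by
    have := geom_sum_Ico_le_of_lt_one (m := 0) (n := k) (by positivity) hβαZ
    rwa [← range_eq_Ico, pow_zero] at this
  calc blBound S β αc αZ k
      ≤ αc * ∑ t ∈ range k, (β * αZ) ^ t + S * ∑ t ∈ range k, (β * αZ) ^ t * 1 / (1 - β) := by
        unfold blBound
        gcongr with t
        exact sub_le_self _ (by positivity)
    _ = (S / (1 - β) + αc) * ∑ t ∈ range k, (β * αZ) ^ t := by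
        rw [← sum_div, ← sum_mul]
        ring
    _ ≤ (S / (1 - β) + αc) * (1 / (1 - β * αZ)) := by gcongr
    _ = 1 / (1 - β * αZ) * (S / (1 - β) + αc) := mul_comm _ _

end blBound

theorem blNormLE_valueIteration {Z U : Type*} [MetricSpace Z] [MeasurableSpace Z] [Finite U]
    [Nonempty U] {c : Z → U → ℝ} {β αc αZ S : ℝ} {η : Z → U → Measure Z}
    [∀ z u, IsProbabilityMeasure (η z u)] (hβ0 : 0 ≤ β) (hβ1 : β ≠ 1) (hαc : 0 ≤ αc)
    (hαZ : 0 ≤ αZ) (hS : 0 ≤ S) (hc : ∀ z u, |c z u| ≤ S)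
    (hc_lip : ∀ z z' u, |c z u - c z' u| ≤ αc * dist z z') (hη : blContract η αZ)
    {v : ℕ → Z → ℝ} (hv0 : v 0 = 0) (hv : ∀ k, v (k + 1) = bellman c β η (v k)) (k : ℕ) :
    (∀ z, |v k z| ≤ S * ∑ t ∈ range k, β ^ t) ∧ blNormLE dist (v k) (blBound S β αc αZ k) := by
  induction k with
  | zero =>
    exact ⟨by simp [hv0], 0, 0, le_rfl, le_rfl, by simp [blBound], by simp [hv0], by simp [hv0]⟩
  | succ k ih =>
    obtain ⟨hsup, hbl⟩ := ih
    have ha : 0 ≤ S * ∑ t ∈ range k, β ^ t := by positivity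
    rw [hv, blBound_succ hβ1]
    refine ⟨fun z => (abs_bellman_le hβ0 hc hsup z).trans_eq ?_,
      bellman_blNormLE hβ0 hαc hαZ hS hc hc_lip hη ha hsup hbl⟩
    rw [geom_sum_succ]
    ring

theorem statement7_general {Z U : Type*} [MetricSpace Z] [MeasurableSpace Z]
    [Fintype U] [Nonempty U]
    (β : ℝ) (hβ0 : 0 < β) (hβ1 : β < 1)
    (c : Z → U → ℝ)
    (hc_bdd : ∃ M : ℝ, ∀ (z : Z) (u : U), |c z u| ≤ M)
    (αc : ℝ) (hαc : 0 ≤ αc)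
    (hc_lip : ∀ (z z' : Z) (u : U), |c z u - c z' u| ≤ αc * dist z z')
    (η : Z → U → MeasureTheory.Measure Z)
    (hη_prob : ∀ (z : Z) (u : U), MeasureTheory.IsProbabilityMeasure (η z u))
    (αZ : ℝ) (hαZ : 0 ≤ αZ)
    (hη_contract : blContract η αZ)
    (v : ℕ → Z → ℝ)
    (hv0 : ∀ z : Z, v 0 z = 0)
    (hv : ∀ (k : ℕ) (z : Z), v (k + 1) z = ⨅ u : U, (c z u + β * ∫ z₁, v k z₁ ∂(η z u))) :
    (∀ k : ℕ, 1 ≤ k →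
      blNormLE dist (v k)
        (αc * ∑ t ∈ Finset.range k, (β * αZ) ^ t +
          supNorm c * ∑ t ∈ Finset.range k, (β * αZ) ^ t * (1 - β ^ (k - t)) / (1 - β))) ∧
    (β * αZ < 1 →
      ∀ k : ℕ, blNormLE dist (v k) (1 / (1 - β * αZ) * (supNorm c / (1 - β) + αc))) := by
  have hbl (k : ℕ) : blNormLE dist (v k) (blBound (supNorm c) β αc αZ k) :=
    (blNormLE_valueIteration hβ0.le hβ1.ne hαc hαZ (supNorm_nonneg c) (abs_le_supNorm hc_bdd)
      hc_lip hη_contract (funext hv0) (fun k => funext (hv k)) k).2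
  exact ⟨fun k _ => hbl k, fun hβαZ k =>
    (hbl k).mono (blBound_le (supNorm_nonneg c) hαc hβ0.le hβ1 hαZ hβαZ k)⟩

theorem statement7 {Z U : Type*} [MetricSpace Z] [MeasurableSpace Z] [BorelSpace Z]
    [Fintype U] [Nonempty U]
    (β : ℝ) (hβ0 : 0 < β) (hβ1 : β < 1)
    (c : Z → U → ℝ)
    (hc_meas : ∀ u : U, Measurable fun z : Z => c z u)
    (hc_bdd : ∃ M : ℝ, ∀ (z : Z) (u : U), |c z u| ≤ M)
    (αc : ℝ) (hαc : 0 ≤ αc)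
    (hc_lip : ∀ (z z' : Z) (u : U), |c z u - c z' u| ≤ αc * dist z z')
    (η : Z → U → MeasureTheory.Measure Z)
    (hη_meas : ∀ u : U, Measurable fun z : Z => η z u)
    (hη_prob : ∀ (z : Z) (u : U), MeasureTheory.IsProbabilityMeasure (η z u))
    (αZ : ℝ) (hαZ : 0 ≤ αZ)
    (hη_contract : blContract η αZ)
    (v : ℕ → Z → ℝ)
    (hv0 : ∀ z : Z, v 0 z = 0)
    (hv : ∀ (k : ℕ) (z : Z), v (k + 1) z = ⨅ u : U, (c z u + β * ∫ z₁, v k z₁ ∂(η z u))) :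
    (∀ k : ℕ, 1 ≤ k →
      blNormLE dist (v k)
        (αc * ∑ t ∈ Finset.range k, (β * αZ) ^ t +
          supNorm c * ∑ t ∈ Finset.range k, (β * αZ) ^ t * (1 - β ^ (k - t)) / (1 - β))) ∧
    (β * αZ < 1 →
      ∀ k : ℕ, blNormLE dist (v k) (1 / (1 - β * αZ) * (supNorm c / (1 - β) + αc))) :=
  statement7_general β hβ0 hβ1 c hc_bdd αc hαc hc_lip η hη_prob αZ hαZ hη_contract v hv0 hv
end
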